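/- arXiv:2010.09827 — 4 statements merged into one kernel-verified Lean document; each statement's English description precedes it below -/
import Mathlib

section
/- Let m ≥ 1, n ≥ 1, D ≥ 1 be integers. There exists a constant C depending only on m, n, D such that the following holds. Let E ⊆ ℝ^n be a finite set and for each x ∈ E let K(x) ⊆ ℝ^D be convex. For x ∈ E and M > 0 define Γ⃗(x,M) := { P⃗ ∈ 𝒫⃗ : |∂^α P⃗(x)| ≤ M for all |α| ≤ m−1, and P⃗(x) ∈ K(x) }. Then (Γ⃗(x,M))_{x∈E, M>0} is a (C, 1)-convex vector-valued shape field. -/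
open scoped BigOperators Classical

noncomputable section

/-- `En n` is Euclidean space `ℝ^n`. -/
abbrev En (n : ℕ) : Type := EuclideanSpace ℝ (Fin n)

/-- First-order partial derivative `∂_i f` in the `i`-th coordinate direction. -/
noncomputable def pd1 {n : ℕ} (i : Fin n) (f : En n → ℝ) : En n → ℝ :=
  fun x => fderiv ℝ f x (EuclideanSpace.single i 1)

/-- Higher-order partial derivative `∂^α f` for a multi-index `α`. -/
noncomputable def pdalpha {n : ℕ} (α : Fin n → ℕ) (f : En n → ℝ) : En n → ℝ :=
  (List.finRange n).foldr (fun i g => (pd1 i)^[α i] g) f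

/-- First-order partial derivative within a set `s`. -/
noncomputable def pd1W {n : ℕ} (s : Set (En n)) (i : Fin n) (f : En n → ℝ) : En n → ℝ :=
  fun x => fderivWithin ℝ f s x (EuclideanSpace.single i 1)

/-- Higher-order partial derivative `∂^α f` within a set `s`. -/
noncomputable def pdalphaW {n : ℕ} (s : Set (En n)) (α : Fin n → ℕ) (f : En n → ℝ) : En n → ℝ :=
  (List.finRange n).foldr (fun i g => (pd1W s i)^[α i] g) f

/-- `∂^α` of a multivariate polynomial (formal derivative). -/
noncomputable def polyPD {n : ℕ} (α : Fin n → ℕ) (p : MvPolynomial (Fin n) ℝ) :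
    MvPolynomial (Fin n) ℝ :=
  (List.finRange n).foldr (fun i q => (fun r => MvPolynomial.pderiv i r)^[α i] q) p

/-- The value `∂^α p (x)` of the `α`-th derivative of a polynomial at `x`. -/
noncomputable def polyPDval {n : ℕ} (α : Fin n → ℕ) (p : MvPolynomial (Fin n) ℝ) (x : En n) : ℝ :=
  MvPolynomial.eval (fun i => x i) (polyPD α p)

/-- The `(m-1)`-jet (Taylor polynomial of degree `≤ m-1`) of `f` at `x`. -/
noncomputable def jetScalar (m : ℕ) {n : ℕ} (f : En n → ℝ) (x : En n) :
    MvPolynomial (Fin n) ℝ :=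
  ∑ α ∈ (Finset.univ : Finset (Fin n → Fin m)).filter (fun α => (∑ i, (α i : ℕ)) ≤ m - 1),
    MvPolynomial.C (pdalpha (fun i => (α i : ℕ)) f x / ((∏ i, Nat.factorial (α i : ℕ) : ℕ) : ℝ))
      * ∏ i, (MvPolynomial.X i - MvPolynomial.C (x i)) ^ ((α i : ℕ))

/-- The `(m-1)`-jet of `f` at `x`, with derivatives taken within a set `s`. -/
noncomputable def jetScalarW (m : ℕ) {n : ℕ} (s : Set (En n)) (f : En n → ℝ) (x : En n) :
    MvPolynomial (Fin n) ℝ :=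
  ∑ α ∈ (Finset.univ : Finset (Fin n → Fin m)).filter (fun α => (∑ i, (α i : ℕ)) ≤ m - 1),
    MvPolynomial.C (pdalphaW s (fun i => (α i : ℕ)) f x / ((∏ i, Nat.factorial (α i : ℕ) : ℕ) : ℝ))
      * ∏ i, (MvPolynomial.X i - MvPolynomial.C (x i)) ^ ((α i : ℕ))

/-- The vector-valued `(m-1)`-jet `J_x F ∈ 𝒫⃗` of `F : ℝ^n → ℝ^D` at `x`. -/
noncomputable def jetD (m : ℕ) {n D : ℕ} (F : En n → Fin D → ℝ) (x : En n) :
    Fin D → MvPolynomial (Fin n) ℝ :=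
  fun j => jetScalar m (fun y => F y j) x

/-- The vector-valued `(m-1)`-jet of `F` at `x`, derivatives within `s`. -/
noncomputable def jetDW (m : ℕ) {n D : ℕ} (s : Set (En n)) (F : En n → Fin D → ℝ) (x : En n) :
    Fin D → MvPolynomial (Fin n) ℝ :=
  fun j => jetScalarW m s (fun y => F y j) x

/-- Truncation of a polynomial to total degree `≤ k`. -/
noncomputable def truncDeg {n : ℕ} (k : ℕ) (p : MvPolynomial (Fin n) ℝ) :
    MvPolynomial (Fin n) ℝ :=
  ∑ s ∈ p.support.filter (fun s => (s.sum fun _ e => e) ≤ k),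
    MvPolynomial.monomial s (MvPolynomial.coeff s p)

/-- The degree-`k` Taylor truncation of a polynomial at `x` (the jet `J_x p` of order `k`). -/
noncomputable def taylorTrunc {n : ℕ} (k : ℕ) (x : En n) (p : MvPolynomial (Fin n) ℝ) :
    MvPolynomial (Fin n) ℝ :=
  MvPolynomial.bind₁ (fun i => MvPolynomial.X i - MvPolynomial.C (x i))
    (truncDeg k (MvPolynomial.bind₁ (fun i => MvPolynomial.X i + MvPolynomial.C (x i)) p))

/-- The ring multiplication `p ⊙_x q := J_x(pq)` on degree-`k` jets at `x`. -/
noncomputable def odot {n : ℕ} (k : ℕ) (x : En n) (p q : MvPolynomial (Fin n) ℝ) :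
    MvPolynomial (Fin n) ℝ :=
  taylorTrunc k x (p * q)

/-- `(Γ x M)_{x ∈ E, M > 0}` is a shape field with jets of degree `≤ k` and `d` components:
each `Γ x M` is a convex set of `d`-tuples of polynomials of degree `≤ k`, monotone in `M`. -/
def IsShapeField {N : ℕ} (k d : ℕ) (E : Finset (En N))
    (Γ : En N → ℝ → Set (Fin d → MvPolynomial (Fin N) ℝ)) : Prop :=
  (∀ x ∈ E, ∀ M : ℝ, 0 < M → Convex ℝ (Γ x M)) ∧
  (∀ x ∈ E, ∀ M : ℝ, 0 < M → ∀ P ∈ Γ x M, ∀ j, (P j).totalDegree ≤ k) ∧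
  (∀ x ∈ E, ∀ M' M : ℝ, 0 < M' → M' ≤ M → Γ x M' ⊆ Γ x M)

/-- `(C_w, δmax)`-convexity of a shape field with jets of degree `≤ k`. -/
def SFConvex {N : ℕ} (k d : ℕ) (E : Finset (En N))
    (Γ : En N → ℝ → Set (Fin d → MvPolynomial (Fin N) ℝ)) (Cw δmax : ℝ) : Prop :=
  ∀ δ : ℝ, 0 < δ → δ ≤ δmax → ∀ x ∈ E, ∀ M : ℝ, 0 < M →
    ∀ P₁ P₂ : Fin d → MvPolynomial (Fin N) ℝ, P₁ ∈ Γ x M → P₂ ∈ Γ x M →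
    ∀ Q₁ Q₂ : MvPolynomial (Fin N) ℝ, Q₁.totalDegree ≤ k → Q₂.totalDegree ≤ k →
    (∀ α : Fin N → ℕ, (∑ i, α i) ≤ k → ∀ j,
      |polyPDval α (P₁ j - P₂ j) x| ≤ M * δ ^ (k + 1 - ∑ i, α i)) →
    (∀ α : Fin N → ℕ, (∑ i, α i) ≤ k →
      |polyPDval α Q₁ x| ≤ δ ^ (-((∑ i, α i : ℕ) : ℤ)) ∧
      |polyPDval α Q₂ x| ≤ δ ^ (-((∑ i, α i : ℕ) : ℤ))) →
    odot k x Q₁ Q₁ + odot k x Q₂ Q₂ = 1 →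
    (fun j => odot k x (odot k x Q₁ Q₁) (P₁ j) + odot k x (odot k x Q₂ Q₂) (P₂ j))
      ∈ Γ x (Cw * M)

/-- `‖(P^x)_{x ∈ S}‖_{Ẇ^m(S)} ≤ M` : the homogeneous Whitney seminorm bound. -/
def WSemiLE (m : ℕ) {N d : ℕ} (S : Finset (En N))
    (P : En N → Fin d → MvPolynomial (Fin N) ℝ) (M : ℝ) : Prop :=
  ∀ x ∈ S, ∀ y ∈ S, x ≠ y → ∀ α : Fin N → ℕ, (∑ i, α i) ≤ m - 1 → ∀ j,
    |polyPDval α (P x j - P y j) x| ≤ M * dist x y ^ (m - ∑ i, α i)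

/-- The homogeneous Whitney seminorm `‖(P^x)_{x ∈ S}‖_{Ẇ^m(S)}`. -/
noncomputable def WNormHomog (m : ℕ) {N d : ℕ} (S : Finset (En N))
    (P : En N → Fin d → MvPolynomial (Fin N) ℝ) : ℝ :=
  sSup {r : ℝ | ∃ x ∈ S, ∃ y ∈ S, x ≠ y ∧ ∃ α : Fin N → ℕ, (∑ i, α i) ≤ m - 1 ∧ ∃ j : Fin d,
    r = |polyPDval α (P x j - P y j) x| / dist x y ^ (m - ∑ i, α i)}

/-- The lower-order part of the Whitney norm. -/
noncomputable def WNormLow (m : ℕ) {N d : ℕ} (S : Finset (En N))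
    (P : En N → Fin d → MvPolynomial (Fin N) ℝ) : ℝ :=
  sSup {r : ℝ | ∃ x ∈ S, ∃ α : Fin N → ℕ, (∑ i, α i) ≤ m - 1 ∧ ∃ j : Fin d,
    r = |polyPDval α (P x j) x|}

/-- The Whitney norm `‖(P^x)_{x ∈ S}‖_{W^m(S)}`. -/
noncomputable def WNormFull (m : ℕ) {N d : ℕ} (S : Finset (En N))
    (P : En N → Fin d → MvPolynomial (Fin N) ℝ) : ℝ :=
  WNormLow m S P + WNormHomog m S P

/-- `‖F‖_{C^m} ≤ M`: all partials of order `≤ m` of all components bounded by `M`. -/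
def CmLE (m : ℕ) {n D : ℕ} (F : En n → Fin D → ℝ) (M : ℝ) : Prop :=
  ∀ α : Fin n → ℕ, (∑ i, α i) ≤ m → ∀ x : En n, ∀ j, |pdalpha α (fun y => F y j) x| ≤ M

/-- `‖F‖_{Ċ^m} ≤ M`: all partials of order `= m` of all components bounded by `M`. -/
def CmHomogLE (m : ℕ) {n D : ℕ} (F : En n → Fin D → ℝ) (M : ℝ) : Prop :=
  ∀ α : Fin n → ℕ, (∑ i, α i) = m → ∀ x : En n, ∀ j, |pdalpha α (fun y => F y j) x| ≤ M

/-- `‖F‖_{C^{m-1,1}} ≤ M`. -/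
def Cm11LE (m : ℕ) {n D : ℕ} (F : En n → Fin D → ℝ) (M : ℝ) : Prop :=
  (∀ α : Fin n → ℕ, (∑ i, α i) ≤ m - 1 → ∀ x : En n, ∀ j,
    |pdalpha α (fun y => F y j) x| ≤ M) ∧
  (∀ α : Fin n → ℕ, (∑ i, α i) = m - 1 → ∀ j, ∀ x y : En n,
    |pdalpha α (fun z => F z j) x - pdalpha α (fun z => F z j) y| ≤ M * dist x y)

/-- A closed cube in `ℝ^n` with lower corner `a` and side length `δ`. -/
def cube {n : ℕ} (a : En n) (δ : ℝ) : Set (En n) := {y | ∀ i, a i ≤ y i ∧ y i ≤ a i + δ}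

/-- The embedding `ℝ^n → ℝ^{n+D}`, `x ↦ (x, 0)`. -/
noncomputable def embed (n D : ℕ) (x : En n) : En (n + D) :=
  (EuclideanSpace.equiv (Fin (n + D)) ℝ).symm
    (Fin.append (fun i : Fin n => x i) (fun _ : Fin D => (0 : ℝ)))

/-- The projection `ℝ^{n+D} → ℝ^n`, `(x, ξ) ↦ x`. -/
noncomputable def projn (n D : ℕ) (z : En (n + D)) : En n :=
  (EuclideanSpace.equiv (Fin n) ℝ).symm (fun i => z (Fin.castAdd D i))

/-- Restriction of a polynomial on `ℝ^{n+D}` to `ℝ^n × {0}`, as a polynomial on `ℝ^n`. -/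
noncomputable def restrict0 (n D : ℕ) (p : MvPolynomial (Fin (n + D)) ℝ) :
    MvPolynomial (Fin n) ℝ :=
  MvPolynomial.aeval
    (Fin.append (fun i : Fin n => (MvPolynomial.X i : MvPolynomial (Fin n) ℝ))
      (fun _ : Fin D => 0)) p


/-- The shape field associated to a selection problem: jets of norm `≤ M` at `x` whose
value at `x` lies in `K x`. -/
noncomputable def GammaK (m : ℕ) {n D : ℕ} (K : En n → Set (Fin D → ℝ)) :
    En n → ℝ → Set (Fin D → MvPolynomial (Fin n) ℝ) :=
  fun x M => {P | (∀ j, (P j).totalDegree ≤ m - 1) ∧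
    (∀ α : Fin n → ℕ, (∑ i, α i) ≤ m - 1 → ∀ j, |polyPDval α (P j) x| ≤ M) ∧
    (fun j => MvPolynomial.eval (fun i => x i) (P j)) ∈ K x}

/-!
Recentering at `x` (the substitution `X ↦ X + x`) turns `∂^α P(x)` into `α!` times the `α`-th
coefficient of `P(X + x)`, and turns `⊙_x` into multiplication followed by truncation at degree
`m - 1`. With `θᵢ = Qᵢ ⊙_x Qᵢ`, the relation `θ₁ + θ₂ = 1` gives
`θ₁ ⊙_x P₁ + θ₂ ⊙_x P₂ = J_x P₂ + θ₁ ⊙_x (P₁ - P₂)`. The coefficients of `θ₁` are `O(δ^{-|μ|})`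
and those of `P₁ - P₂` are `O(M δ^{m-|μ|})`, so those of their product are `O(M δ^{m-|μ|}) = O(M)`
for `|μ| ≤ m - 1` and `δ ≤ 1`. At `x` itself the combination is `θ₁(x) P₁(x) + θ₂(x) P₂(x)` with
weights `θᵢ(x) = Qᵢ(x)² ≥ 0` summing to `1`, hence lies in the convex set `K(x)`.
-/

open MvPolynomial Finset
open scoped Nat

section Recenter

variable {σ R : Type*} [CommRing R]

def recenter (a : σ → R) : MvPolynomial σ R →ₐ[R] MvPolynomial σ R :=
  bind₁ fun i => X i + C (a i)

@[simp]
theorem recenter_X (a : σ → R) (i : σ) : recenter a (X i) = X i + C (a i) :=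
  bind₁_X_right _ _

theorem recenter_recenter_neg (a : σ → R) (p : MvPolynomial σ R) :
    recenter a (recenter (-a) p) = p := by
  simp [recenter, bind₁_bind₁]

theorem eval_eq_constantCoeff_recenter (a : σ → R) (p : MvPolynomial σ R) :
    eval a p = constantCoeff (recenter a p) := by
  rw [← eval_zero', recenter, eval, eval, eval₂Hom_bind₁]
  simp

theorem pderiv_recenter (a : σ → R) (i : σ) (p : MvPolynomial σ R) :
    pderiv i (recenter a p) = recenter a (pderiv i p) := by
  induction p using MvPolynomial.induction_on with
  | C c => simp [recenter]
  | add p q hp hq => simp [hp, hq]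
  | mul_X p j h =>
    simp only [map_mul, recenter_X, Derivation.leibniz, pderiv_X, smul_eq_mul, map_add, h,
      pderiv_C, add_zero, Pi.single_apply]
    split_ifs <;> simp

theorem totalDegree_recenter_le (a : σ → R) (p : MvPolynomial σ R) :
    (recenter a p).totalDegree ≤ p.totalDegree := by
  have hX : ∀ i, (X i + C (a i) : MvPolynomial σ R).totalDegree ≤ 1 := fun i =>
    (totalDegree_add _ _).trans (max_le ((totalDegree_monomial_le _ _).trans (by simp)) (by simp))
  conv_lhs => rw [p.as_sum, map_sum]
  refine (totalDegree_finsetSum _ _).trans (Finset.sup_le fun s hs => ?_)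
  rw [recenter, bind₁_monomial]
  refine (totalDegree_mul _ _).trans ?_
  rw [totalDegree_C, zero_add]
  refine (totalDegree_finsetProd _ _).trans ((Finset.sum_le_sum fun i _ => ?_).trans
    (le_totalDegree hs))
  exact (totalDegree_pow _ _).trans (by simpa using Nat.mul_le_mul_left (s i) (hX i))

end Recenter

section TaylorTruncation

variable {n : ℕ}

theorem coeff_truncDeg (k : ℕ) (μ : Fin n →₀ ℕ) (p : MvPolynomial (Fin n) ℝ) :
    coeff μ (truncDeg k p) = if μ.degree ≤ k then coeff μ p else 0 := by
  rw [truncDeg, coeff_sum]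
  simp only [coeff_monomial]
  rw [Finset.sum_ite_eq']
  by_cases hμ : coeff μ p = 0
  · simp [hμ]
  · simp only [Finset.mem_filter, mem_support_iff, hμ, ne_eq, not_false_eq_true, true_and]
    rfl

theorem totalDegree_truncDeg_le (k : ℕ) (p : MvPolynomial (Fin n) ℝ) :
    (truncDeg k p).totalDegree ≤ k :=
  (totalDegree_finsetSum _ _).trans <| Finset.sup_le fun _ hs =>
    (totalDegree_monomial_le _ _).trans (Finset.mem_filter.mp hs).2

theorem taylorTrunc_eq (k : ℕ) (x : En n) (p : MvPolynomial (Fin n) ℝ) :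
    taylorTrunc k x p = recenter (-fun i => x i) (truncDeg k (recenter (fun i => x i) p)) := by
  simp only [taylorTrunc, recenter, Pi.neg_apply, map_neg, ← sub_eq_add_neg]

theorem recenter_taylorTrunc (k : ℕ) (x : En n) (p : MvPolynomial (Fin n) ℝ) :
    recenter (fun i => x i) (taylorTrunc k x p) = truncDeg k (recenter (fun i => x i) p) := by
  rw [taylorTrunc_eq, recenter_recenter_neg]

theorem totalDegree_odot_le (k : ℕ) (x : En n) (p q : MvPolynomial (Fin n) ℝ) :
    (odot k x p q).totalDegree ≤ k := by
  rw [odot, taylorTrunc_eq]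
  exact (totalDegree_recenter_le _ _).trans (totalDegree_truncDeg_le _ _)

theorem coeff_recenter_odot {k : ℕ} (x : En n) (p q : MvPolynomial (Fin n) ℝ)
    {μ : Fin n →₀ ℕ} (hμ : μ.degree ≤ k) :
    coeff μ (recenter (fun i => x i) (odot k x p q))
      = coeff μ (recenter (fun i => x i) p * recenter (fun i => x i) q) := by
  rw [odot, recenter_taylorTrunc, coeff_truncDeg, if_pos hμ, map_mul]

theorem eval_odot (k : ℕ) (x : En n) (p q : MvPolynomial (Fin n) ℝ) :
    eval (fun i => x i) (odot k x p q) = eval (fun i => x i) p * eval (fun i => x i) q := by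
  rw [← map_mul, eval_eq_constantCoeff_recenter, eval_eq_constantCoeff_recenter,
    constantCoeff_eq, coeff_recenter_odot x p q (by simp), map_mul]

end TaylorTruncation

section PartialDerivatives

theorem coeff_iterate_pderiv {σ R : Type*} [CommSemiring R] (i : σ) (j : ℕ)
    (p : MvPolynomial σ R) (μ : σ →₀ ℕ) :
    coeff μ ((fun q => pderiv i q)^[j] p)
      = coeff (μ + Finsupp.single i j) p * (μ i + j).descFactorial j := by
  induction j generalizing μ with
  | zero => simp
  | succ j ih =>
    rw [Function.iterate_succ_apply', coeff_pderiv, ih, add_assoc, ← Finsupp.single_add,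
      Nat.descFactorial_succ]
    simp only [Finsupp.add_apply, Finsupp.single_eq_same]
    rw [show μ i + 1 + j = μ i + (j + 1) by omega, show 1 + j = j + 1 by omega,
      show μ i + (j + 1) - j = μ i + 1 by omega]
    push_cast
    ring

variable {n : ℕ}

theorem coeff_foldr_iterate_pderiv (α : Fin n → ℕ) (p : MvPolynomial (Fin n) ℝ) :
    ∀ (l : List (Fin n)), l.Nodup → ∀ μ : Fin n →₀ ℕ,
    coeff μ (l.foldr (fun i q => (fun r => pderiv i r)^[α i] q) p)
      = coeff (μ + (l.map fun i => Finsupp.single i (α i)).sum) p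
          * (l.map fun i => ((μ i + α i).descFactorial (α i) : ℝ)).prod
  | [], _, μ => by simp
  | i :: l, hl, μ => by
    rw [List.nodup_cons] at hl
    have hμ : ∀ j ∈ l, (μ + Finsupp.single i (α i)) j = μ j := fun j hj => by
      simp [Finsupp.single_eq_of_ne (ne_of_mem_of_not_mem hj hl.1)]
    have hprod : (l.map fun j => (((μ + Finsupp.single i (α i)) j + α j).descFactorial (α j) : ℝ))
        = l.map fun j => ((μ j + α j).descFactorial (α j) : ℝ) :=
      List.map_congr_left fun j hj => by rw [hμ j hj]
    rw [List.foldr_cons, coeff_iterate_pderiv, coeff_foldr_iterate_pderiv α p l hl.2, hprod]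
    simp only [List.map_cons, List.sum_cons, List.prod_cons, add_assoc]
    ring

theorem coeff_zero_polyPD (μ : Fin n →₀ ℕ) (p : MvPolynomial (Fin n) ℝ) :
    coeff 0 (polyPD μ p) = coeff μ p * ∏ i, ((μ i)! : ℝ) := by
  rw [polyPD, coeff_foldr_iterate_pderiv _ p _ (List.nodup_finRange n), ← Fin.prod_univ_def,
    ← Fin.sum_univ_def, Finsupp.univ_sum_single, zero_add]
  simp [Nat.descFactorial_self]

theorem polyPD_recenter (a : Fin n → ℝ) (α : Fin n → ℕ) (p : MvPolynomial (Fin n) ℝ) :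
    polyPD α (recenter a p) = recenter a (polyPD α p) := by
  have hcomm : ∀ i j, Function.Commute (fun r => pderiv i r)^[j] (recenter a) := fun i j =>
    Function.Commute.iterate_left (fun r => pderiv_recenter a i r) j
  rw [polyPD, polyPD]
  induction List.finRange n with
  | nil => rfl
  | cons i l ih => rw [List.foldr_cons, List.foldr_cons, ih, hcomm i (α i) _]

theorem polyPDval_eq_coeff_recenter (μ : Fin n →₀ ℕ) (p : MvPolynomial (Fin n) ℝ) (x : En n) :
    polyPDval μ p x = coeff μ (recenter (fun i => x i) p) * ∏ i, ((μ i)! : ℝ) := by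
  rw [polyPDval, eval_eq_constantCoeff_recenter, constantCoeff_eq, ← polyPD_recenter,
    coeff_zero_polyPD]

end PartialDerivatives

section ScaledBounds

variable {σ : Type*} [Fintype σ]

theorem card_antidiagonal_le_of_degree_le {k : ℕ} {t : σ →₀ ℕ} (ht : t.degree ≤ k) :
    #(antidiagonal t) ≤ (k + 1) ^ Fintype.card σ := calc
  #(antidiagonal t) ≤ #(Iic t) :=
    card_le_card_of_injOn Prod.fst (fun _ h => mem_Iic.mpr (HasAntidiagonal.antidiagonal.fst_le h))
      fun a ha b hb hab => by
        have ha' := mem_antidiagonal.mp ha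
        have hb' := mem_antidiagonal.mp hb
        exact Prod.ext hab (add_left_cancel (ha'.trans (hab ▸ hb'.symm)))
  _ = ∏ i ∈ t.support, (t i + 1) := by simp [Finsupp.card_Iic]
  _ ≤ ∏ _i ∈ t.support, (k + 1) :=
    prod_le_prod' fun i _ => Nat.succ_le_succ ((Finsupp.le_degree i t).trans ht)
  _ ≤ (k + 1) ^ Fintype.card σ := by
    rw [prod_const]
    exact Nat.pow_le_pow_right k.succ_pos (card_le_univ _)

/-- Applied to `p(X + x)`, the coefficient form of the bounds `|∂^α p(x)| ≤ A δ^(s - |α|)`,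
`|α| ≤ k`, on a jet at scale `δ`. -/
def ScaledCoeffBound (k : ℕ) (A δ : ℝ) (s : ℤ) (p : MvPolynomial σ ℝ) : Prop :=
  ∀ μ : σ →₀ ℕ, μ.degree ≤ k → |coeff μ p| ≤ A * δ ^ (s - μ.degree)

theorem ScaledCoeffBound.mul {k : ℕ} {A B δ : ℝ} {s t : ℤ} {p q : MvPolynomial σ ℝ}
    (hδ : 0 < δ) (hA : 0 ≤ A) (hB : 0 ≤ B)
    (hp : ScaledCoeffBound k A δ s p) (hq : ScaledCoeffBound k B δ t q) :
    ScaledCoeffBound k ((k + 1) ^ Fintype.card σ * (A * B)) δ (s + t) (p * q) := by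
  intro μ hμ
  have hterm : ∀ ν ∈ antidiagonal μ,
      |coeff ν.1 p * coeff ν.2 q| ≤ A * B * δ ^ (s + t - μ.degree) := by
    intro ν hν
    have hsplit : ν.1.degree + ν.2.degree = μ.degree := by
      rw [← map_add, mem_antidiagonal.mp hν]
    have h₁ := hp ν.1 (by omega)
    have h₂ := hq ν.2 (by omega)
    calc |coeff ν.1 p * coeff ν.2 q|
        ≤ (A * δ ^ (s - ν.1.degree)) * (B * δ ^ (t - ν.2.degree)) := by
          rw [abs_mul]; exact mul_le_mul h₁ h₂ (abs_nonneg _) (by positivity)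
      _ = A * B * δ ^ (s + t - μ.degree) := by
          rw [mul_mul_mul_comm, ← zpow_add₀ hδ.ne', ← hsplit]
          push_cast
          ring_nf
  calc |coeff μ (p * q)|
      ≤ ∑ ν ∈ antidiagonal μ, |coeff ν.1 p * coeff ν.2 q| := by
        rw [coeff_mul]; exact abs_sum_le_sum_abs _ _
    _ ≤ #(antidiagonal μ) * (A * B * δ ^ (s + t - μ.degree)) := by
        simpa using sum_le_card_nsmul _ _ _ hterm
    _ ≤ (k + 1) ^ Fintype.card σ * (A * B * δ ^ (s + t - μ.degree)) := by
        gcongr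
        exact_mod_cast card_antidiagonal_le_of_degree_le hμ
    _ = _ := by ring

end ScaledBounds

section Partition

variable {n : ℕ}

theorem one_le_prod_factorial (μ : Fin n →₀ ℕ) : (1 : ℝ) ≤ ∏ i, ((μ i)! : ℝ) := by
  exact_mod_cast Finset.one_le_prod' fun i _ => Nat.one_le_iff_ne_zero.mpr (μ i).factorial_ne_zero

theorem prod_factorial_le_factorial {k : ℕ} {μ : Fin n →₀ ℕ} (hμ : μ.degree ≤ k) :
    ∏ i, ((μ i)! : ℝ) ≤ k ! := by
  have h := Nat.le_of_dvd (Nat.factorial_pos _) (Nat.prod_factorial_dvd_factorial_sum univ μ)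
  rw [← Finsupp.degree_eq_sum] at h
  exact_mod_cast h.trans (Nat.factorial_le hμ)

theorem scaledCoeffBound_recenter {k : ℕ} {A δ : ℝ} {s : ℤ} {x : En n}
    {p : MvPolynomial (Fin n) ℝ}
    (h : ∀ μ : Fin n →₀ ℕ, μ.degree ≤ k → |polyPDval μ p x| ≤ A * δ ^ (s - μ.degree)) :
    ScaledCoeffBound k A δ s (recenter (fun i => x i) p) := fun μ hμ => by
  refine le_trans ?_ (h μ hμ)
  rw [polyPDval_eq_coeff_recenter, abs_mul]
  exact le_mul_of_one_le_right (abs_nonneg _) ((one_le_prod_factorial μ).trans (le_abs_self _))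

theorem ScaledCoeffBound.recenter_odot {k : ℕ} {A B δ : ℝ} {s t : ℤ} {x : En n}
    {p q : MvPolynomial (Fin n) ℝ} (hδ : 0 < δ) (hA : 0 ≤ A) (hB : 0 ≤ B)
    (hp : ScaledCoeffBound k A δ s (recenter (fun i => x i) p))
    (hq : ScaledCoeffBound k B δ t (recenter (fun i => x i) q)) :
    ScaledCoeffBound k ((k + 1) ^ n * (A * B)) δ (s + t) (recenter (fun i => x i) (odot k x p q)) :=
  fun μ hμ => by
    rw [coeff_recenter_odot x p q hμ]
    simpa using hp.mul hδ hA hB hq μ hμ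

theorem coeff_recenter_partition {k : ℕ} {x : En n} {P₁ P₂ Q₁ Q₂ : MvPolynomial (Fin n) ℝ}
    (hpart : odot k x Q₁ Q₁ + odot k x Q₂ Q₂ = 1) {μ : Fin n →₀ ℕ} (hμ : μ.degree ≤ k) :
    coeff μ (recenter (fun i => x i)
        (odot k x (odot k x Q₁ Q₁) P₁ + odot k x (odot k x Q₂ Q₂) P₂))
      = coeff μ (recenter (fun i => x i) P₂)
        + coeff μ (recenter (fun i => x i) (odot k x (odot k x Q₁ Q₁) (P₁ - P₂))) := by
  have hθ : recenter (fun i => x i) (odot k x Q₂ Q₂)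
      = 1 - recenter (fun i => x i) (odot k x Q₁ Q₁) := by
    rw [eq_sub_iff_add_eq', ← map_add, hpart, map_one]
  rw [map_add, coeff_add, coeff_recenter_odot x _ _ hμ, coeff_recenter_odot x _ _ hμ,
    coeff_recenter_odot x _ _ hμ, ← coeff_add, ← coeff_add, hθ, map_sub]
  congr 1
  ring

theorem abs_polyPDval_partition_le {k : ℕ} {x : En n} {δ M : ℝ} (hδ : 0 < δ) (hδ₁ : δ ≤ 1)
    (hM : 0 ≤ M) {P₁ P₂ Q₁ Q₂ : MvPolynomial (Fin n) ℝ}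
    (hP₂ : ∀ μ : Fin n →₀ ℕ, μ.degree ≤ k → |polyPDval μ P₂ x| ≤ M)
    (hP : ScaledCoeffBound k M δ (k + 1) (recenter (fun i => x i) (P₁ - P₂)))
    (hQ₁ : ScaledCoeffBound k 1 δ 0 (recenter (fun i => x i) Q₁))
    (hpart : odot k x Q₁ Q₁ + odot k x Q₂ Q₂ = 1) {μ : Fin n →₀ ℕ} (hμ : μ.degree ≤ k) :
    |polyPDval μ (odot k x (odot k x Q₁ Q₁) P₁ + odot k x (odot k x Q₂ Q₂) P₂) x|
      ≤ (1 + k ! * (k + 1) ^ (2 * n)) * M := by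
  have hR := ((hQ₁.recenter_odot hδ zero_le_one zero_le_one hQ₁).recenter_odot hδ
    (by positivity) hM hP) μ hμ
  have hδpow : δ ^ ((0 + 0 + (k + 1) : ℤ) - μ.degree) ≤ 1 :=
    zpow_le_one₀ hδ hδ₁ (by omega)
  set R := coeff μ (recenter (fun i => x i) (odot k x (odot k x Q₁ Q₁) (P₁ - P₂)))
  calc |polyPDval μ (odot k x (odot k x Q₁ Q₁) P₁ + odot k x (odot k x Q₂ Q₂) P₂) x|
      = |polyPDval μ P₂ x + R * ∏ i, ((μ i)! : ℝ)| := by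
        rw [polyPDval_eq_coeff_recenter, coeff_recenter_partition hpart hμ, add_mul,
          ← polyPDval_eq_coeff_recenter]
    _ ≤ M + (k + 1) ^ n * ((k + 1) ^ n * (1 * 1) * M) * k ! := by
        refine (abs_add_le _ _).trans (add_le_add (hP₂ μ hμ) ?_)
        rw [abs_mul, abs_of_nonneg (zero_le_one.trans (one_le_prod_factorial μ))]
        refine mul_le_mul ?_ (prod_factorial_le_factorial hμ) (by positivity) (by positivity)
        exact hR.trans (mul_le_of_le_one_right (by positivity) hδpow)
    _ = (1 + k ! * (k + 1) ^ (2 * n)) * M := by ring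

end Partition

section SelectionShapeField

variable {n D : ℕ}

theorem polyPDval_add_smul (α : Fin n → ℕ) (a b : ℝ) (p q : MvPolynomial (Fin n) ℝ) (x : En n) :
    polyPDval α (a • p + b • q) x = a * polyPDval α p x + b * polyPDval α q x := by
  obtain ⟨μ, rfl⟩ : ∃ μ : Fin n →₀ ℕ, ⇑μ = α := ⟨Finsupp.equivFunOnFinite.symm α, rfl⟩
  simp only [polyPDval_eq_coeff_recenter, map_add, map_smul, coeff_add, coeff_smul, smul_eq_mul]
  ring

theorem convex_gammaK (m : ℕ) {K : En n → Set (Fin D → ℝ)} {x : En n} (hK : Convex ℝ (K x))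
    (M : ℝ) : Convex ℝ (GammaK m K x M) := by
  rintro P ⟨hPdeg, hPder, hPval⟩ P' ⟨hP'deg, hP'der, hP'val⟩ a b ha hb hab
  refine ⟨fun j => ?_, fun α hα j => ?_, ?_⟩
  · exact (totalDegree_add _ _).trans (max_le ((totalDegree_smul_le _ _).trans (hPdeg j))
      ((totalDegree_smul_le _ _).trans (hP'deg j)))
  · calc |polyPDval α (a • P j + b • P' j) x|
        ≤ a * |polyPDval α (P j) x| + b * |polyPDval α (P' j) x| := by
          rw [polyPDval_add_smul]
          exact (abs_add_le _ _).trans_eq (by rw [abs_mul, abs_mul, abs_of_nonneg ha,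
            abs_of_nonneg hb])
      _ ≤ a * M + b * M := by gcongr <;> [exact hPder α hα j; exact hP'der α hα j]
      _ = M := by rw [← add_mul, hab, one_mul]
  · convert hK hPval hP'val ha hb hab using 1
    ext j
    simp [smul_eq_C_mul]

theorem isShapeField_gammaK (m : ℕ) (E : Finset (En n)) (K : En n → Set (Fin D → ℝ))
    (hK : ∀ x ∈ E, Convex ℝ (K x)) : IsShapeField (m - 1) D E (GammaK m K) :=
  ⟨fun x hx M _ => convex_gammaK m (hK x hx) M, fun _ _ _ _ _ hP => hP.1,
    fun _ _ _ _ _ hM _ hP => ⟨hP.1, fun α hα j => (hP.2.1 α hα j).trans hM, hP.2.2⟩⟩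

theorem eval_odot_partition_mem {k : ℕ} {x : En n} {K : Set (Fin D → ℝ)} (hK : Convex ℝ K)
    {P₁ P₂ : Fin D → MvPolynomial (Fin n) ℝ} {Q₁ Q₂ : MvPolynomial (Fin n) ℝ}
    (hP₁ : (fun j => eval (fun i => x i) (P₁ j)) ∈ K)
    (hP₂ : (fun j => eval (fun i => x i) (P₂ j)) ∈ K)
    (hpart : odot k x Q₁ Q₁ + odot k x Q₂ Q₂ = 1) :
    (fun j => eval (fun i => x i)
      (odot k x (odot k x Q₁ Q₁) (P₁ j) + odot k x (odot k x Q₂ Q₂) (P₂ j))) ∈ K := by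
  have hsum := congrArg (eval fun i => x i) hpart
  simp only [map_add, map_one, eval_odot] at hsum
  convert hK hP₁ hP₂ (mul_self_nonneg _) (mul_self_nonneg _) hsum using 1
  ext j
  simp [eval_odot]

theorem sfConvex_gammaK (m : ℕ) (E : Finset (En n)) (K : En n → Set (Fin D → ℝ))
    (hK : ∀ x ∈ E, Convex ℝ (K x)) :
    SFConvex (m - 1) D E (GammaK m K) (1 + (m - 1)! * ((m - 1 : ℕ) + 1 : ℝ) ^ (2 * n)) 1 := by
  intro δ hδ hδ₁ x hx M hM P₁ P₂ hP₁ hP₂ Q₁ Q₂ _ _ hdiff hQ hpart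
  have hQ₁ : ScaledCoeffBound (m - 1) 1 δ 0 (recenter (fun i => x i) Q₁) :=
    scaledCoeffBound_recenter fun μ hμ => by
      have h := (hQ μ (by rwa [← Finsupp.degree_eq_sum])).1
      rw [← Finsupp.degree_eq_sum] at h
      rwa [one_mul, zero_sub]
  have hP (j : Fin D) :
      ScaledCoeffBound (m - 1) M δ (m - 1 + 1 : ℕ) (recenter (fun i => x i) (P₁ j - P₂ j)) :=
    scaledCoeffBound_recenter fun μ hμ => by
      have h := hdiff μ (by rwa [← Finsupp.degree_eq_sum]) j
      rwa [← Finsupp.degree_eq_sum, ← zpow_natCast, Nat.cast_sub (by omega)] at h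
  refine ⟨fun j => (totalDegree_add _ _).trans (max_le (totalDegree_odot_le _ _ _ _)
    (totalDegree_odot_le _ _ _ _)), fun α hα j => ?_,
    eval_odot_partition_mem (hK x hx) hP₁.2.2 hP₂.2.2 hpart⟩
  obtain ⟨μ, rfl⟩ : ∃ μ : Fin n →₀ ℕ, ⇑μ = α := ⟨Finsupp.equivFunOnFinite.symm α, rfl⟩
  exact abs_polyPDval_partition_le hδ hδ₁ hM.le
    (fun ν hν => hP₂.2.1 ν (by rwa [← Finsupp.degree_eq_sum]) j) (by exact_mod_cast hP j) hQ₁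
    hpart (by rwa [Finsupp.degree_eq_sum])

end SelectionShapeField

theorem selection_shape_field_is_Cw_convex_general
    (m n D : ℕ) :
    ∃ C : ℝ, 0 < C ∧
      ∀ E : Finset (En n), ∀ K : En n → Set (Fin D → ℝ),
        (∀ x ∈ E, Convex ℝ (K x)) →
        IsShapeField (m - 1) D E (GammaK m K) ∧
        SFConvex (m - 1) D E (GammaK m K) C 1 :=
  ⟨_, by positivity, fun E K hK => ⟨isShapeField_gammaK m E K hK, sfConvex_gammaK m E K hK⟩⟩

/-- If each `K x` is convex, then the family `Γ⃗(x,M) = {P⃗ ∈ 𝒫⃗ : |∂^α P⃗(x)| ≤ M for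
|α| ≤ m-1, P⃗(x) ∈ K(x)}` is a `(C,1)`-convex vector-valued shape field, with
`C = C(m,n,D)`. -/
theorem selection_shape_field_is_Cw_convex
    (m n D : ℕ) (hm : 1 ≤ m) (hn : 1 ≤ n) (hD : 1 ≤ D) :
    ∃ C : ℝ, 0 < C ∧
      ∀ E : Finset (En n), ∀ K : En n → Set (Fin D → ℝ),
        (∀ x ∈ E, Convex ℝ (K x)) →
        IsShapeField (m - 1) D E (GammaK m K) ∧
        SFConvex (m - 1) D E (GammaK m K) C 1 :=
  selection_shape_field_is_Cw_convex_general m n D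

end
end

section
/- Let V be a finite-dimensional real normed vector space and let K ⊆ V be a nonempty bounded convex set. Then for every δ > 0 there exist finitely many continuous linear functionals ξ_1,…,ξ_N ∈ V* and real numbers c_1,…,c_N such that the convex polytope K_δ := { v ∈ V : ξ_i(v) ≤ c_i for all 1 ≤ i ≤ N } satisfies K ⊆ K_δ ⊆ B_δ(K), where B_δ(K) := { v ∈ V : there exists w ∈ K with ‖v − w‖ < δ } is the open δ-neighborhood of K. -/
/-!
The level set `S = {x | infDist x K = δ}` is compact and misses the closed convex set
`A = closure K`, so by Hahn–Banach each point of `S` is strictly separated from `A` by a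
half-space, and finitely many of these open half-spaces cover `S`. The polytope `P` cut out by the
complementary closed half-spaces contains `A` and misses `S`. As `P` is connected and
`infDist · K` vanishes on `K ⊆ P`, the intermediate value theorem keeps it below `δ` on `P`.
-/

open Metric Set

def polytope {E ι : Type*} [TopologicalSpace E] [AddCommGroup E] [Module ℝ E]
    (ξ : ι → E →L[ℝ] ℝ) (c : ι → ℝ) : Set E :=
  {v | ∀ i, ξ i v ≤ c i}

theorem convex_polytope {E ι : Type*} [TopologicalSpace E] [AddCommGroup E] [Module ℝ E]
    (ξ : ι → E →L[ℝ] ℝ) (c : ι → ℝ) : Convex ℝ (polytope ξ c) := by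
  simpa only [polytope, ofPred_forall, ContinuousLinearMap.coe_coe] using
    convex_iInter fun i => convex_halfSpace_le (ξ i).toLinearMap.isLinear (c i)

theorem exists_polytope_superset_disjoint_of_isCompact {E : Type*} [TopologicalSpace E]
    [AddCommGroup E] [Module ℝ E] [IsTopologicalAddGroup E] [ContinuousSMul ℝ E]
    [LocallyConvexSpace ℝ E] {A S : Set E} (hAconv : Convex ℝ A) (hAclosed : IsClosed A)
    (hS : IsCompact S) (hAS : Disjoint A S) :
    ∃ (N : ℕ) (ξ : Fin N → E →L[ℝ] ℝ) (c : Fin N → ℝ),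
      A ⊆ polytope ξ c ∧ Disjoint (polytope ξ c) S := by
  classical
  have hsep (x : S) : ∃ p : (E →L[ℝ] ℝ) × ℝ, (∀ a ∈ A, p.1 a < p.2) ∧ p.2 < p.1 x := by
    obtain ⟨f, u, hA, hx⟩ :=
      geometric_hahn_banach_closed_point hAconv hAclosed (hAS.notMem_of_mem_right x.2)
    exact ⟨(f, u), hA, hx⟩
  choose p hpA hpx using hsep
  obtain ⟨t, hcover⟩ := hS.elim_finite_subcover (fun x => {y | (p x).2 < (p x).1 y})
    (fun x => isOpen_lt continuous_const (p x).1.continuous)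
    (fun x hx => mem_iUnion.2 ⟨⟨x, hx⟩, hpx ⟨x, hx⟩⟩)
  let e := t.equivFin.symm
  refine ⟨t.card, fun i => (p (e i)).1, fun i => (p (e i)).2,
    fun a ha i => (hpA (e i) a ha).le, disjoint_right.2 fun y hy hyP => ?_⟩
  obtain ⟨x, hxt, hxy⟩ := mem_iUnion₂.1 (hcover hy)
  exact (hxy : (p x).2 < (p x).1 y).not_ge (by simpa [e] using hyP (t.equivFin ⟨x, hxt⟩))

theorem Bornology.IsBounded.isCompact_infDist_eq {X : Type*} [PseudoMetricSpace X]
    [ProperSpace X] {K : Set X} (hK : Bornology.IsBounded K) (hne : K.Nonempty) (r : ℝ) :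
    IsCompact {x | infDist x K = r} :=
  isCompact_of_isClosed_isBounded (isClosed_eq (continuous_infDist_pt K) continuous_const)
    ((hK.thickening (δ := r + 1)).subset fun _ hx =>
      (mem_thickening_iff_infDist_lt hne).2 (hx.trans_lt (lt_add_one r)))

theorem disjoint_closure_infDist_eq {X : Type*} [PseudoMetricSpace X] (K : Set X) {r : ℝ}
    (hr : 0 < r) : Disjoint (closure K) {x | infDist x K = r} :=
  disjoint_left.2 fun _ hx hxr => hr.ne' (hxr.symm.trans (infDist_zero_of_mem_closure hx))

theorem IsPreconnected.subset_thickening_of_disjoint {X : Type*} [PseudoMetricSpace X]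
    {P K : Set X} {r : ℝ} (hP : IsPreconnected P) (hK : K.Nonempty) (hKP : K ⊆ P) (hr : 0 ≤ r)
    (hPr : Disjoint P {x | infDist x K = r}) : P ⊆ thickening r K := by
  intro v hv
  rw [mem_thickening_iff_infDist_lt hK]
  by_contra! hrv
  obtain ⟨a, ha⟩ := hK
  have hr_mem : r ∈ Icc (infDist a K) (infDist v K) := by
    rw [infDist_zero_of_mem ha]
    exact ⟨hr, hrv⟩
  obtain ⟨y, hyP, hy⟩ :=
    hP.intermediate_value (hKP ha) hv (continuous_infDist_pt K).continuousOn hr_mem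
  exact disjoint_left.1 hPr hyP hy

/-- **Polytope approximation of convex sets** (Lemma 4.1): every nonempty bounded convex
set `K` in a finite-dimensional real normed space is contained in a convex polytope
`K_δ = {v : ξᵢ v ≤ cᵢ, 1 ≤ i ≤ N}` which lies inside the open `δ`-neighborhood of `K`. -/
theorem polytope_approximation_of_convex
    (V : Type*) [NormedAddCommGroup V] [NormedSpace ℝ V] [FiniteDimensional ℝ V]
    (K : Set V) (hne : K.Nonempty) (hconv : Convex ℝ K) (hbdd : Bornology.IsBounded K)
    (δ : ℝ) (hδ : 0 < δ) :
    ∃ (N : ℕ) (ξ : Fin N → (V →L[ℝ] ℝ)) (c : Fin N → ℝ),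
      K ⊆ {v : V | ∀ i, ξ i v ≤ c i} ∧
      {v : V | ∀ i, ξ i v ≤ c i} ⊆ {v : V | ∃ w ∈ K, ‖v - w‖ < δ} := by
  obtain ⟨N, ξ, c, hKP, hPS⟩ := exists_polytope_superset_disjoint_of_isCompact hconv.closure
    isClosed_closure (hbdd.isCompact_infDist_eq hne δ) (disjoint_closure_infDist_eq K hδ)
  have hP_thickening : polytope ξ c ⊆ thickening δ K :=
    (convex_polytope ξ c).isPreconnected.subset_thickening_of_disjoint hne
      (subset_closure.trans hKP) hδ.le hPS
  refine ⟨N, ξ, c, subset_closure.trans hKP, fun v hv => ?_⟩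
  obtain ⟨w, hwK, hvw⟩ := mem_thickening_iff.1 (hP_thickening hv)
  exact ⟨w, hwK, by rwa [← dist_eq_norm]⟩
end

section
/- Let V be a finite-dimensional real vector space with dual V*, let q be a positive integer, let L : V* → ℝ^q be a linear map, and let L* : ℝ^q → V be its dual operator, characterized by x · L(φ) = φ(L*(x)) for all x ∈ ℝ^q and φ ∈ V*. Let b ∈ ℝ^q and v ∈ V. Suppose there exists φ_0 ∈ V* with L(φ_0) ≤ b (componentwise). Then sup { φ(v) : φ ∈ V*, L(φ) ≤ b componentwise } = inf { b · y : y ∈ ℝ^q, y ≥ 0 componentwise, L*(y) = v }, where both sides are interpreted in the extended reals (in particular, the supremum is +∞ if and only if the infimum is over the empty set). -/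
/-!
Weak duality is the estimate `φ v = ∑ yᵢ (L φ)ᵢ ≤ b · y`. Conversely, if every feasible `φ` has
`φ v < c`, the system `L φ ≤ b, c ≤ φ v` is infeasible, and Gale's theorem of the alternative gives
`(t, y) ≥ 0` with `L* y = t v` and `b · y < t c`. Feasibility of the primal forces `t > 0`, so
`y / t` is dual feasible with value below `c`.

Gale's alternative follows from separating `d` from the cone `range M + ℝ≥0^κ` by Hahn–Banach. That
cone is closed: it is the preimage, under a projection with kernel `range M`, of the image of an
orthant under a linear map, and such images are closed since a conic Carathéodory reduction writes
them as finite unions of images of orthants on which the map is injective.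
-/

open Finset

lemma exists_nonneg_sub_smul_eq_zero {ι : Type*} [Fintype ι] {y d : ι → ℝ} (hy : 0 ≤ y)
    {i₀ : ι} (hi₀ : 0 < d i₀) : ∃ j, 0 < d j ∧ ∃ t : ℝ, 0 ≤ y - t • d ∧ (y - t • d) j = 0 := by
  classical
  obtain ⟨j, hj, hmin⟩ :=
    (univ.filter (0 < d ·)).exists_min_image (fun i => y i / d i) ⟨i₀, by simpa using hi₀⟩
  rw [mem_filter] at hj
  refine ⟨j, hj.2, y j / d j, fun i => ?_, by simp [div_mul_cancel₀ _ hj.2.ne']⟩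
  simp only [Pi.zero_apply, Pi.sub_apply, Pi.smul_apply, smul_eq_mul, sub_nonneg]
  rcases le_or_gt (d i) 0 with hi | hi
  · exact (mul_nonpos_of_nonneg_of_nonpos (div_nonneg (hy j) hj.2.le) hi).trans (hy i)
  · calc y j / d j * d i ≤ y i / d i * d i :=
          mul_le_mul_of_nonneg_right (hmin i (by simpa using hi)) hi.le
      _ = y i := div_mul_cancel₀ _ hi.ne'

namespace LinearMap

variable {ι E : Type*} [Fintype ι] [AddCommGroup E] [Module ℝ E]

lemma image_nonneg_supported_eq_biUnion_erase [DecidableEq ι] (f : (ι → ℝ) →ₗ[ℝ] E)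
    {s : Finset ι} {d : ι → ℝ} (hds : ∀ i ∉ s, d i = 0) (hfd : f d = 0) (hd : d ≠ 0) :
    f '' {y | 0 ≤ y ∧ ∀ i ∉ s, y i = 0} =
      ⋃ j ∈ s, f '' {y | 0 ≤ y ∧ ∀ i ∉ s.erase j, y i = 0} := by
  wlog hpos : ∃ i, 0 < d i generalizing d
  · push Not at hpos
    obtain ⟨i, hi⟩ := Function.ne_iff.1 hd
    exact this (d := -d) (by simpa using hds) (by simp [hfd]) (neg_ne_zero.2 hd)
      ⟨i, by simpa using (hpos i).lt_of_ne hi⟩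
  obtain ⟨i₀, hi₀⟩ := hpos
  refine subset_antisymm ?_ (Set.iUnion₂_subset fun j _ => Set.image_mono fun y hy =>
    ⟨hy.1, fun i hi => hy.2 i fun h => hi (mem_of_mem_erase h)⟩)
  rintro _ ⟨y, ⟨hy, hys⟩, rfl⟩
  obtain ⟨j, hj, t, hyt, hytj⟩ := exists_nonneg_sub_smul_eq_zero hy hi₀
  have hjs : j ∈ s := by_contra fun h => hj.ne' (hds j h)
  refine Set.mem_iUnion₂.2 ⟨j, hjs, y - t • d, ⟨hyt, fun i hi => ?_⟩, by simp [hfd]⟩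
  by_cases hij : i = j
  · exact hij ▸ hytj
  · have his : i ∉ s := fun h => hi (mem_erase_of_ne_of_mem hij h)
    simp [hys i his, hds i his]

variable [TopologicalSpace E] [IsTopologicalAddGroup E] [ContinuousSMul ℝ E] [T2Space E]

lemma isClosed_image_nonneg_supported (f : (ι → ℝ) →ₗ[ℝ] E) (s : Finset ι) :
    IsClosed (f '' {y | 0 ≤ y ∧ ∀ i ∉ s, y i = 0}) := by
  classical
  induction s using Finset.strongInduction with
  | H s ih =>
  by_cases hdep : ∃ d : ι → ℝ, (∀ i ∉ s, d i = 0) ∧ f d = 0 ∧ d ≠ 0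
  · obtain ⟨d, hds, hfd, hd⟩ := hdep
    rw [f.image_nonneg_supported_eq_biUnion_erase hds hfd hd]
    exact isClosed_biUnion_finset fun j hj => ih _ (erase_ssubset hj)
  · push Not at hdep
    let V : Submodule ℝ (ι → ℝ) := ⨅ (i) (_ : i ∉ s), ker (proj i)
    have hV : ∀ y, y ∈ V ↔ ∀ i ∉ s, y i = 0 := by simp [V]
    have hinj : ker (f ∘ₗ V.subtype) = ⊥ :=
      ker_eq_bot'.2 fun y hy => Subtype.ext (hdep y ((hV y).1 y.2) hy)
    have himage : f '' {y | 0 ≤ y ∧ ∀ i ∉ s, y i = 0} =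
        (f ∘ₗ V.subtype) '' (Subtype.val ⁻¹' Set.Ici 0) := by
      ext x
      constructor
      · rintro ⟨y, ⟨hy, hys⟩, rfl⟩
        exact ⟨⟨y, (hV y).2 hys⟩, hy, rfl⟩
      · rintro ⟨y, hy, rfl⟩
        exact ⟨y, ⟨hy, (hV y).1 y.2⟩, rfl⟩
    rw [himage]
    exact (isClosedEmbedding_of_injective hinj).isClosedMap _
      (isClosed_Ici.preimage continuous_subtype_val)

lemma isClosed_image_nonneg (f : (ι → ℝ) →ₗ[ℝ] E) : IsClosed (f '' {y | 0 ≤ y}) := by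
  simpa using f.isClosed_image_nonneg_supported univ

end LinearMap

open PointedCone in
lemma PointedCone.isClosed_sup_positive {κ : Type*} [Fintype κ] (S : Submodule ℝ (κ → ℝ)) :
    IsClosed ((S ⊔ positive ℝ (κ → ℝ) : PointedCone ℝ (κ → ℝ)) : Set (κ → ℝ)) := by
  obtain ⟨T, hST⟩ := S.exists_isCompl
  let P := T.projectionOnto S hST.symm
  have hP : LinearMap.ker P = S := Submodule.ker_projectionOnto hST.symm
  have hcone : ((S ⊔ positive ℝ (κ → ℝ) : PointedCone ℝ (κ → ℝ)) : Set (κ → ℝ)) =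
      P ⁻¹' (P '' {z | 0 ≤ z}) := by
    ext x
    simp only [SetLike.mem_coe, Submodule.mem_sup, mem_ofSubmodule_iff, mem_positive,
      Set.mem_preimage, Set.mem_image, Set.mem_ofPred_eq]
    constructor
    · rintro ⟨s, hs, z, hz, rfl⟩
      refine ⟨z, hz, ?_⟩
      have hPs : P s = 0 := LinearMap.mem_ker.1 (hP ▸ hs)
      rw [map_add, hPs, zero_add]
    · rintro ⟨z, hz, hPz⟩
      refine ⟨x - z, ?_, z, hz, sub_add_cancel x z⟩
      rw [← hP, LinearMap.mem_ker, map_sub, hPz, sub_self]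
  rw [hcone]
  exact P.isClosed_image_nonneg.preimage P.continuous_of_finiteDimensional

theorem exists_nonneg_certificate_of_not_exists_le {W κ : Type*} [AddCommGroup W] [Module ℝ W]
    [Fintype κ] (M : W →ₗ[ℝ] (κ → ℝ)) (d : κ → ℝ) (h : ¬ ∃ w, M w ≤ d) :
    ∃ u : κ → ℝ, 0 ≤ u ∧ (∀ w, ∑ k, u k * M w k = 0) ∧ ∑ k, u k * d k < 0 := by
  classical
  let C : PointedCone ℝ (κ → ℝ) :=
    .ofSubmodule (LinearMap.range M) ⊔ PointedCone.positive ℝ (κ → ℝ)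
  have hdC : d ∉ C := by
    intro hd
    obtain ⟨_, ⟨w, rfl⟩, z, hz, hwz⟩ := Submodule.mem_sup.1 hd
    exact h ⟨w, hwz ▸ le_add_of_nonneg_right hz⟩
  obtain ⟨φ, hφC, hφd⟩ :=
    ProperCone.hyperplane_separation_point ⟨C, PointedCone.isClosed_sup_positive _⟩ hdC
  have hφ : ∀ x, φ x = ∑ k, φ (Pi.single k 1) * x k := fun x => by
    conv_lhs => rw [← univ_sum_single x, map_sum]
    refine sum_congr rfl fun k _ => ?_
    rw [mul_comm, ← smul_eq_mul, ← map_smul, ← Pi.single_smul, smul_eq_mul, mul_one]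
  have hφM : ∀ w, φ (M w) = 0 := fun w =>
    le_antisymm (by simpa using hφC (M (-w)) (Submodule.mem_sup_left ⟨-w, rfl⟩))
      (hφC (M w) (Submodule.mem_sup_left ⟨w, rfl⟩))
  refine ⟨fun k => φ (Pi.single k 1), fun k => hφC _ (Submodule.mem_sup_right ?_),
    fun w => by rw [← hφ, hφM], by rwa [← hφ]⟩
  exact Pi.single_nonneg.2 zero_le_one

section Duality

variable {V ι : Type*} [AddCommGroup V] [Module ℝ V] [Fintype ι]
  {L : Module.Dual ℝ V →ₗ[ℝ] (ι → ℝ)} {Lstar : (ι → ℝ) →ₗ[ℝ] V}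

theorem weak_duality
    (hdual : ∀ (x : ι → ℝ) (φ : Module.Dual ℝ V), ∑ i, x i * L φ i = φ (Lstar x))
    {b y : ι → ℝ} {v : V} {φ : Module.Dual ℝ V} (hφ : L φ ≤ b) (hy : 0 ≤ y)
    (hyv : Lstar y = v) : φ v ≤ ∑ i, b i * y i :=
  calc φ v = ∑ i, y i * L φ i := by rw [← hyv, hdual]
    _ ≤ ∑ i, y i * b i := sum_le_sum fun i _ => mul_le_mul_of_nonneg_left (hφ i) (hy i)
    _ = ∑ i, b i * y i := by simp_rw [mul_comm]

theorem exists_dual_lt_of_forall_primal_lt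
    (hdual : ∀ (x : ι → ℝ) (φ : Module.Dual ℝ V), ∑ i, x i * L φ i = φ (Lstar x))
    {b : ι → ℝ} {v : V} {c : ℝ} (hfeas : ∃ φ₀, L φ₀ ≤ b) (hc : ∀ φ, L φ ≤ b → φ v < c) :
    ∃ y, 0 ≤ y ∧ Lstar y = v ∧ ∑ i, b i * y i < c := by
  obtain ⟨φ₀, hφ₀⟩ := hfeas
  -- `M φ ≤ d` says `L φ ≤ b` and `c ≤ φ v`
  let M : Module.Dual ℝ V →ₗ[ℝ] (Option ι → ℝ) :=
    LinearMap.pi fun o => o.elim (-Module.Dual.eval ℝ V v) fun i => LinearMap.proj i ∘ₗ L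
  let d : Option ι → ℝ := fun o => o.elim (-c) b
  have hM : ¬ ∃ φ, M φ ≤ d := fun ⟨φ, hφ⟩ => by
    have hv : -(φ v) ≤ -c := hφ none
    linarith [hc φ fun i => hφ (some i)]
  obtain ⟨u, hu, huM, hud⟩ := exists_nonneg_certificate_of_not_exists_le M d hM
  set t := u none
  set y : ι → ℝ := fun i => u (some i)
  have hy : 0 ≤ y := fun i => hu (some i)
  have hyL : ∀ φ, ∑ i, y i * L φ i = t * φ v := fun φ => by
    have h := huM φ
    rw [Fintype.sum_option] at h
    change t * -(φ v) + ∑ i, y i * L φ i = 0 at h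
    linarith
  have hLy : Lstar y = t • v := by
    rw [← sub_eq_zero, ← Module.forall_dual_apply_eq_zero_iff ℝ]
    intro φ
    rw [map_sub, map_smul, ← hdual, hyL, smul_eq_mul, sub_self]
  have hyb : ∑ i, b i * y i < t * c := by
    rw [Fintype.sum_option] at hud
    change t * -c + ∑ i, y i * b i < 0 at hud
    simp only [mul_comm (y _)] at hud
    linarith
  have ht : 0 < t := by
    refine (show 0 ≤ t from hu none).lt_of_ne fun h0 => ?_
    have hby := weak_duality hdual hφ₀ hy (hLy.trans (by rw [← h0, zero_smul]))
    rw [map_zero] at hby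
    rw [← h0, zero_mul] at hyb
    linarith
  refine ⟨t⁻¹ • y, smul_nonneg (inv_nonneg.2 ht.le) hy,
    by rw [map_smul, hLy, inv_smul_smul₀ ht.ne'], ?_⟩
  calc ∑ i, b i * (t⁻¹ • y) i = t⁻¹ * ∑ i, b i * y i := by
        simp only [Pi.smul_apply, smul_eq_mul, mul_sum]
        exact sum_congr rfl fun i _ => by ring
    _ < t⁻¹ * (t * c) := mul_lt_mul_of_pos_left hyb (inv_pos.2 ht)
    _ = c := inv_mul_cancel_left₀ ht.ne' c

end Duality

theorem lp_duality_finite_dimensional_general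
    (V : Type*) [AddCommGroup V] [Module ℝ V]
    (q : ℕ)
    (L : Module.Dual ℝ V →ₗ[ℝ] (Fin q → ℝ)) (Lstar : (Fin q → ℝ) →ₗ[ℝ] V)
    (hdual : ∀ (x : Fin q → ℝ) (φ : Module.Dual ℝ V), ∑ i, x i * L φ i = φ (Lstar x))
    (b : Fin q → ℝ) (v : V)
    (hfeas : ∃ φ₀ : Module.Dual ℝ V, ∀ i, L φ₀ i ≤ b i) :
    sSup {r : EReal | ∃ φ : Module.Dual ℝ V, (∀ i, L φ i ≤ b i) ∧ r = ((φ v : ℝ) : EReal)}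
      = sInf {r : EReal | ∃ y : Fin q → ℝ, (∀ i, 0 ≤ y i) ∧ Lstar y = v ∧
          r = ((∑ i, b i * y i : ℝ) : EReal)} := by
  refine le_antisymm (sSup_le ?_) (not_lt.1 fun hlt => ?_)
  · rintro _ ⟨φ, hφ, rfl⟩
    refine le_sInf ?_
    rintro _ ⟨y, hy, hyv, rfl⟩
    exact EReal.coe_le_coe_iff.2 (weak_duality hdual hφ hy hyv)
  · obtain ⟨c, hsup, hinf⟩ := EReal.exists_between_coe_real hlt
    have hprimal : ∀ φ, L φ ≤ b → φ v < c := fun φ hφ => by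
      refine EReal.coe_lt_coe_iff.1 (lt_of_le_of_lt ?_ hsup)
      exact le_sSup ⟨φ, hφ, rfl⟩
    obtain ⟨y, hy, hyv, hyc⟩ := exists_dual_lt_of_forall_primal_lt hdual hfeas hprimal
    refine hinf.not_ge (le_trans ?_ (EReal.coe_le_coe_iff.2 hyc.le))
    exact sInf_le ⟨y, hy, hyv, rfl⟩

/-- **LP duality in a finite-dimensional vector space** (Lemma A.2): if the primal
problem `L φ ≤ b` is feasible, then `sup {φ(v) : L φ ≤ b}` equals
`inf {b·y : y ≥ 0, L* y = v}`, as extended reals. -/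
theorem lp_duality_finite_dimensional
    (V : Type*) [AddCommGroup V] [Module ℝ V] [FiniteDimensional ℝ V]
    (q : ℕ) (hq : 0 < q)
    (L : Module.Dual ℝ V →ₗ[ℝ] (Fin q → ℝ)) (Lstar : (Fin q → ℝ) →ₗ[ℝ] V)
    (hdual : ∀ (x : Fin q → ℝ) (φ : Module.Dual ℝ V), ∑ i, x i * L φ i = φ (Lstar x))
    (b : Fin q → ℝ) (v : V)
    (hfeas : ∃ φ₀ : Module.Dual ℝ V, ∀ i, L φ₀ i ≤ b i) :
    sSup {r : EReal | ∃ φ : Module.Dual ℝ V, (∀ i, L φ i ≤ b i) ∧ r = ((φ v : ℝ) : EReal)}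
      = sInf {r : EReal | ∃ y : Fin q → ℝ, (∀ i, 0 ≤ y i) ∧ Lstar y = v ∧
          r = ((∑ i, b i * y i : ℝ) : EReal)} :=
  lp_duality_finite_dimensional_general V q L Lstar hdual b v hfeas
end

section
/- Let m ≥ 1, n ≥ 1, D ≥ 1 be integers. There exists a constant C depending only on m, n, D such that the following holds. Let S ⊆ ℝ^n be finite and let (P⃗^x)_{x∈S} be a Whitney field with values in 𝒫⃗ (D-tuples of degree-(m−1) polynomials on ℝ^n) satisfying ‖(P⃗^x)_{x∈S}‖_{Ẇ^m(S)} ≤ M_0. Write points of ℝ^{n+D} as (y, ξ) with y ∈ ℝ^n, ξ ∈ ℝ^D, set S⁺ := { (x,0) : x ∈ S }, and for each x ∈ S define the scalar polynomial P^{(x,0)}(y, ξ) := Σ_{j=1}^D ξ_j · P^x_j(y) on ℝ^{n+D}, which has degree ≤ m. Then the scalar Whitney field (P^{(x,0)})_{(x,0)∈S⁺} satisfies ‖(P^{(x,0)})_{(x,0)∈S⁺}‖_{Ẇ^{m+1}(S⁺)} ≤ C·M_0, i.e. for all distinct (x,0), (y,0) ∈ S⁺ and all multi-indices γ on ℝ^{n+D}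 with |γ| ≤ m, |∂^γ(P^{(x,0)} − P^{(y,0)})(x,0)| ≤ C·M_0·|x − y|^{(m+1)−|γ|}. -/
open scoped BigOperators Classical

noncomputable section

/-!
With `R_j := P^x_j - P^y_j`, the difference of the two lifted polynomials is `∑_j ξ_j R_j(y)`.
By the Leibniz rule for the linear factor `ξ_j`, at a point with `ξ = 0` we get
`∂^γ (ξ_j R_j) = γ_j ∂^{γ - e_j} R_j`, and since `R_j` does not depend on `ξ` this vanishes unless
the `ξ`-part of `γ` is exactly `e_j`; then it equals `∂^β R_j (x)` with `|β| = |γ| - 1`, so the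
`Ẇ^{m+1}` estimate is the `Ẇ^m` estimate of `R_j`, with `C = 1`.
-/

namespace MvPolynomial

variable {σ τ R : Type*} [CommSemiring R]

def pderivFold (L : List σ) (α : σ → ℕ) : Module.End R (MvPolynomial σ R) :=
  (L.map fun i => (pderiv i).toLinearMap ^ α i).prod

@[simp] lemma pderivFold_nil (α : σ → ℕ) : pderivFold (R := R) [] α = 1 := rfl

lemma pderivFold_cons (i : σ) (L : List σ) (α : σ → ℕ) :
    pderivFold (R := R) (i :: L) α = (pderiv i).toLinearMap ^ α i * pderivFold L α := rfl

lemma pderivFold_append (L₁ L₂ : List σ) (α : σ → ℕ) :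
    pderivFold (R := R) (L₁ ++ L₂) α = pderivFold L₁ α * pderivFold L₂ α := by
  simp only [pderivFold, List.map_append, List.prod_append]

lemma pderivFold_congr {L : List σ} {α β : σ → ℕ} (h : ∀ i ∈ L, α i = β i) :
    pderivFold (R := R) L α = pderivFold L β := by
  unfold pderivFold
  rw [List.map_congr_left fun i hi => by rw [h i hi]]

lemma pderiv_pow_apply_of_pderiv_eq_zero {i : σ} {q : MvPolynomial σ R} (h : pderiv i q = 0)
    (t : ℕ) : ((pderiv i).toLinearMap ^ t) q = if t = 0 then q else 0 := by
  cases t with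
  | zero => simp
  | succ t => simp [pow_succ, Module.End.mul_apply, h]

lemma pderiv_pow_X_mul_of_ne {i k : σ} (h : i ≠ k) (t : ℕ) (q : MvPolynomial σ R) :
    ((pderiv i).toLinearMap ^ t) (X k * q) = X k * ((pderiv i).toLinearMap ^ t) q := by
  have hsemi : Function.Semiconj (fun q : MvPolynomial σ R => X k * q) (pderiv i) (pderiv i) :=
    fun q => by simp [pderiv_X_of_ne h.symm]
  simp only [Module.End.pow_apply]
  exact ((hsemi.iterate_right t) q).symm

lemma pderiv_pow_X_mul_self (k : σ) (t : ℕ) (q : MvPolynomial σ R) :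
    ((pderiv k).toLinearMap ^ t) (X k * q)
      = X k * ((pderiv k).toLinearMap ^ t) q + t • ((pderiv k).toLinearMap ^ (t - 1)) q := by
  have hsucc : ∀ s (p : MvPolynomial σ R),
      pderiv k (((pderiv k).toLinearMap ^ s) p) = ((pderiv k).toLinearMap ^ (s + 1)) p :=
    fun s p => by rw [pow_succ', Module.End.mul_apply, Derivation.coeFn_coe]
  induction t with
  | zero => simp
  | succ t ih =>
    conv_lhs => rw [pow_succ', Module.End.mul_apply, ih, Derivation.coeFn_coe, map_add, map_nsmul,
      pderiv_mul, pderiv_X_self, one_mul, hsucc]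
    rcases t with _ | t
    · simp [add_comm]
    · rw [Nat.add_sub_cancel, Nat.add_sub_cancel, hsucc, succ_nsmul _ (t + 1)]
      abel

lemma pderivFold_X_mul [DecidableEq σ] {L : List σ} (hL : L.Nodup) (α : σ → ℕ) (k : σ)
    (q : MvPolynomial σ R) :
    pderivFold L α (X k * q) = X k * pderivFold L α q
      + (if k ∈ L then α k else 0) • pderivFold L (Function.update α k (α k - 1)) q := by
  induction L with
  | nil => simp
  | cons i L ih =>
    obtain ⟨hiL, hL⟩ := List.nodup_cons.mp hL
    rw [pderivFold_cons, pderivFold_cons, Module.End.mul_apply, ih hL, map_add, map_nsmul]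
    by_cases hik : i = k
    · subst hik
      have hupd : pderivFold L (Function.update α i (α i - 1)) = pderivFold (R := R) L α :=
        pderivFold_congr fun j hj => Function.update_of_ne (ne_of_mem_of_not_mem hj hiL) _ _
      simp [hiL, pderiv_pow_X_mul_self, hupd]
    · simp [pderiv_pow_X_mul_of_ne hik, Function.update_of_ne hik, List.mem_cons, Ne.symm hik]

lemma pderivFold_of_pderiv_eq_zero {L : List σ} (α : σ → ℕ) {q : MvPolynomial σ R}
    (h : ∀ i ∈ L, pderiv i q = 0) :
    pderivFold L α q = if ∀ i ∈ L, α i = 0 then q else 0 := by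
  induction L with
  | nil => simp
  | cons i L ih =>
    rw [pderivFold_cons, Module.End.mul_apply, ih fun j hj => h j (List.mem_cons_of_mem i hj)]
    split_ifs with hL hi hi <;>
      simp_all [pderiv_pow_apply_of_pderiv_eq_zero (h i List.mem_cons_self)]

lemma pderiv_rename_of_forall_ne {f : σ → τ} {i : τ} (hf : ∀ a, f a ≠ i)
    (p : MvPolynomial σ R) : pderiv i (rename f p) = 0 := by
  classical
  apply pderiv_eq_zero_of_notMem_vars
  intro hi
  obtain ⟨a, -, rfl⟩ := Finset.mem_image.mp (vars_rename f p hi)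
  exact hf a rfl

lemma pderivFold_map_rename {f : σ → τ} (hf : Function.Injective f) (L : List σ)
    (α : τ → ℕ) (p : MvPolynomial σ R) :
    pderivFold (L.map f) α (rename f p) = rename f (pderivFold L (α ∘ f) p) := by
  induction L with
  | nil => simp
  | cons i L ih =>
    have hsemi : Function.Semiconj (rename f) (pderiv (R := R) i) (pderiv (f i)) :=
      fun q => (pderiv_rename hf i q).symm
    rw [List.map_cons, pderivFold_cons, pderivFold_cons, Module.End.mul_apply, ih,
      Module.End.mul_apply]
    simp only [Module.End.pow_apply, Function.comp_apply]
    exact (hsemi.iterate_right (α (f i)) _).symm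

end MvPolynomial

open MvPolynomial

lemma List.finRange_add (n D : ℕ) : List.finRange (n + D)
    = (List.finRange n).map (Fin.castAdd D) ++ (List.finRange D).map (Fin.natAdd n) := by
  rw [← List.ofFn_id, List.ofFn_add, List.ofFn_eq_map, List.ofFn_eq_map]
  rfl

lemma Fin.castAdd_ne_natAdd {n D : ℕ} (i : Fin n) (j : Fin D) :
    Fin.castAdd D i ≠ Fin.natAdd n j :=
  Fin.ne_of_lt (by simp only [Fin.lt_def, Fin.val_castAdd, Fin.val_natAdd]; omega)

lemma polyPD_eq_pderivFold {N : ℕ} (α : Fin N → ℕ) (p : MvPolynomial (Fin N) ℝ) :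
    polyPD α p = pderivFold (List.finRange N) α p := by
  unfold polyPD
  induction List.finRange N with
  | nil => rfl
  | cons i L ih => rw [List.foldr_cons, ih, pderivFold_cons, Module.End.mul_apply,
      Module.End.pow_apply, Derivation.coeFn_coe]

lemma polyPDval_sum {N : ℕ} {ι : Type*} (α : Fin N → ℕ) (s : Finset ι)
    (f : ι → MvPolynomial (Fin N) ℝ) (x : En N) :
    polyPDval α (∑ i ∈ s, f i) x = ∑ i ∈ s, polyPDval α (f i) x := by
  simp only [polyPDval, polyPD_eq_pderivFold, map_sum]

lemma polyPD_X_mul {N : ℕ} (α : Fin N → ℕ) (k : Fin N) (q : MvPolynomial (Fin N) ℝ) :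
    polyPD α (X k * q) = X k * polyPD α q + α k • polyPD (Function.update α k (α k - 1)) q := by
  simp only [polyPD_eq_pderivFold, pderivFold_X_mul (List.nodup_finRange N),
    List.mem_finRange, if_true]

lemma polyPD_rename_castAdd {n D : ℕ} (α : Fin (n + D) → ℕ) (p : MvPolynomial (Fin n) ℝ) :
    polyPD α (rename (Fin.castAdd D) p)
      = if ∀ j, α (Fin.natAdd n j) = 0 then
          rename (Fin.castAdd D) (polyPD (fun i => α (Fin.castAdd D i)) p)
        else 0 := by
  have hkill : ∀ i ∈ (List.finRange D).map (Fin.natAdd n),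
      pderiv i (rename (Fin.castAdd D) p) = 0 := by
    simp only [List.mem_map, List.mem_finRange, true_and, forall_exists_index,
      forall_apply_eq_imp_iff]
    exact fun j => pderiv_rename_of_forall_ne (fun i => Fin.castAdd_ne_natAdd i j) p
  rw [polyPD_eq_pderivFold, List.finRange_add, pderivFold_append, Module.End.mul_apply,
    pderivFold_of_pderiv_eq_zero α hkill]
  simp only [List.mem_map, List.mem_finRange, true_and, forall_exists_index,
    forall_apply_eq_imp_iff]
  split_ifs
  · rw [pderivFold_map_rename (Fin.castAdd_injective n D), polyPD_eq_pderivFold]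
    rfl
  · exact map_zero _

lemma nsmul_ite_forall_update_pred_eq_zero {ι M : Type*} [DecidableEq ι] [AddCommMonoid M]
    (γ : ι → ℕ) (j : ι) (v : M) :
    γ j • (if ∀ i, Function.update γ j (γ j - 1) i = 0 then v else 0)
      = if γ = Pi.single j 1 then v else 0 := by
  by_cases hγ : γ = Pi.single j 1
  · subst hγ
    rw [if_pos rfl, Pi.single_eq_same, one_smul, if_pos]
    intro i
    by_cases hi : i = j <;> simp [hi]
  · rw [if_neg hγ]
    split_ifs with hupd
    · suffices γ j = 0 by rw [this, zero_smul]
      by_contra hj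
      refine hγ (funext fun i => ?_)
      have hi := hupd i
      by_cases hij : i = j
      · subst hij
        simp only [Function.update_self] at hi
        simp only [Pi.single_eq_same]
        omega
      · simpa [Function.update_of_ne hij, Pi.single_apply, hij] using hi
    · exact smul_zero _

section Embedding

variable {n D : ℕ}

@[simp] lemma embed_castAdd (x : En n) (i : Fin n) : embed n D x (Fin.castAdd D i) = x i := by
  simp [embed, Fin.append_left]

@[simp] lemma embed_natAdd (x : En n) (j : Fin D) : embed n D x (Fin.natAdd n j) = 0 := by
  simp [embed, Fin.append_right]

@[simp] lemma projn_embed (x : En n) : projn n D (embed n D x) = x := by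
  ext i
  simp [projn]

lemma dist_embed (x y : En n) : dist (embed n D x) (embed n D y) = dist x y := by
  simp only [EuclideanSpace.dist_eq, Fin.sum_univ_add, embed_castAdd, embed_natAdd, sub_self,
    Real.dist_eq, abs_zero, sq, mul_zero, Finset.sum_const_zero, add_zero]

lemma eval_embed_rename_castAdd (x : En n) (q : MvPolynomial (Fin n) ℝ) :
    eval (fun i => embed n D x i) (rename (Fin.castAdd D) q) = eval (fun i => x i) q := by
  rw [eval_rename]
  exact congrArg (eval · q) (funext (embed_castAdd x))

lemma polyPDval_X_natAdd_mul_rename (α : Fin (n + D) → ℕ) (j : Fin D)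
    (p : MvPolynomial (Fin n) ℝ) (x : En n) :
    polyPDval α (X (Fin.natAdd n j) * rename (Fin.castAdd D) p) (embed n D x)
      = if (fun i => α (Fin.natAdd n i)) = Pi.single j 1 then
          polyPDval (fun i => α (Fin.castAdd D i)) p x
        else 0 := by
  have hcastAdd : (fun i => Function.update α (Fin.natAdd n j) (α (Fin.natAdd n j) - 1)
      (Fin.castAdd D i)) = fun i => α (Fin.castAdd D i) :=
    funext fun i => Function.update_of_ne (Fin.castAdd_ne_natAdd i j) _ _
  have hnatAdd : ∀ i,
      Function.update α (Fin.natAdd n j) (α (Fin.natAdd n j) - 1) (Fin.natAdd n i)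
        = Function.update (fun i => α (Fin.natAdd n i)) j (α (Fin.natAdd n j) - 1) i :=
    congrFun (Function.update_comp_eq_of_injective α (Fin.natAdd_injective D n) j _)
  rw [polyPDval, polyPDval, polyPD_X_mul, map_add, map_mul, eval_X, embed_natAdd, zero_mul,
    zero_add, map_nsmul, polyPD_rename_castAdd, hcastAdd, apply_ite (eval _), map_zero,
    eval_embed_rename_castAdd]
  simp only [hnatAdd]
  convert nsmul_ite_forall_update_pred_eq_zero (fun i => α (Fin.natAdd n i)) j
    (eval (fun i => x i) (polyPD (fun i => α (Fin.castAdd D i)) p)) using 3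

end Embedding

lemma WSemiLE.nonneg {m N d : ℕ} {S : Finset (En N)}
    {P : En N → Fin d → MvPolynomial (Fin N) ℝ} {M : ℝ} (hP : WSemiLE m S P M) {x y : En N}
    (hx : x ∈ S) (hy : y ∈ S) (hxy : x ≠ y) (j : Fin d) : 0 ≤ M := by
  have hbound := hP x hx y hy hxy 0 (by simp) j
  exact (mul_nonneg_iff_of_pos_right (pow_pos (dist_pos.mpr hxy) _)).mp
    ((abs_nonneg _).trans hbound)

theorem gradient_trick_whitney_field_general
    (m n D : ℕ) (hD : 1 ≤ D) :
    ∃ C : ℝ, 0 < C ∧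
      ∀ S : Finset (En n), ∀ P : En n → Fin D → MvPolynomial (Fin n) ℝ,
        (∀ x ∈ S, ∀ j, (P x j).totalDegree ≤ m - 1) →
        ∀ M₀ : ℝ, WSemiLE m S P M₀ →
          WSemiLE (m + 1) (S.image (embed n D))
            (fun z => fun _ : Fin 1 =>
              ∑ j : Fin D, MvPolynomial.X (Fin.natAdd n j) *
                MvPolynomial.rename (Fin.castAdd D) (P (projn n D z) j))
            (C * M₀) := by
  refine ⟨1, one_pos, fun S P _ M₀ hP => ?_⟩
  rintro _ hz _ hw hzw α hα -
  obtain ⟨x, hx, rfl⟩ := Finset.mem_image.mp hz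
  obtain ⟨y, hy, rfl⟩ := Finset.mem_image.mp hw
  have hxy : x ≠ y := ne_of_apply_ne _ hzw
  simp only [projn_embed, dist_embed, one_mul, ← Finset.sum_sub_distrib, ← mul_sub, ← map_sub,
    polyPDval_sum, polyPDval_X_natAdd_mul_rename]
  by_cases hγ : ∃ j₀, (fun i => α (Fin.natAdd n i)) = Pi.single j₀ 1
  · obtain ⟨j₀, hj₀⟩ := hγ
    have hothers : ∀ j ∈ Finset.univ, j ≠ j₀ →
        (if (fun i => α (Fin.natAdd n i)) = Pi.single j 1 then
          polyPDval (fun i => α (Fin.castAdd D i)) (P x j - P y j) x else 0) = 0 :=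
      fun j _ hj => if_neg fun h => by
        simpa [Pi.single_apply, hj] using congrFun (h.symm.trans hj₀) j
    rw [Finset.sum_eq_single j₀ hothers (by simp), if_pos hj₀]
    have horder : ∑ i, α i = ∑ i, α (Fin.castAdd D i) + 1 := by
      rw [Fin.sum_univ_add, show ∑ i, α (Fin.natAdd n i) = 1 by simp [hj₀]]
    convert hP x hx y hy hxy (fun i => α (Fin.castAdd D i)) (by omega) j₀ using 3
    omega
  · rw [Finset.sum_eq_zero fun j _ => if_neg fun h => hγ ⟨j, h⟩, abs_zero]
    exact mul_nonneg (hP.nonneg hx hy hxy ⟨0, hD⟩) (pow_nonneg dist_nonneg _)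

/-- **The gradient trick on Whitney fields** (Section 5): given a Whitney field
`(P⃗^x)_{x∈S}` of `Ẇ^m(S)`-seminorm `≤ M₀`, the lifted scalar Whitney field
`P^{(x,0)}(y,ξ) = Σ_j ξ_j P^x_j(y)` on `S⁺ = S × {0} ⊆ ℝ^{n+D}` has
`Ẇ^{m+1}(S⁺)`-seminorm `≤ C·M₀`, with `C = C(m,n,D)`. -/
theorem gradient_trick_whitney_field
    (m n D : ℕ) (hm : 1 ≤ m) (hn : 1 ≤ n) (hD : 1 ≤ D) :
    ∃ C : ℝ, 0 < C ∧
      ∀ S : Finset (En n), ∀ P : En n → Fin D → MvPolynomial (Fin n) ℝ,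
        (∀ x ∈ S, ∀ j, (P x j).totalDegree ≤ m - 1) →
        ∀ M₀ : ℝ, WSemiLE m S P M₀ →
          WSemiLE (m + 1) (S.image (embed n D))
            (fun z => fun _ : Fin 1 =>
              ∑ j : Fin D, MvPolynomial.X (Fin.natAdd n j) *
                MvPolynomial.rename (Fin.castAdd D) (P (projn n D z) j))
            (C * M₀) :=
  gradient_trick_whitney_field_general m n D hD
end
end
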